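/- arXiv:1210.2845 — 2 statements merged into one kernel-verified Lean document; each statement's English description precedes it below -/
import Mathlib

section
/- (No-signaling bound on the guessing probability.) Let ρ be a density matrix on ℂ^d, let ρ_1,…,ρ_N and σ_1,…,σ_N be density matrices, and let p_1,…,p_N ∈ [0,1] with Σ_x p_x > 0 be such that ρ = p_x ρ_x + (1 − p_x) σ_x for every x (N decompositions of one ensemble). Then for every N-outcome POVM (M_x)_{x=1}^N, Σ_x p_x tr(M_x ρ_x) ≤ 1; equivalently, with priors q_x = p_x / Σ_y p_y, the guessing probability for {q_x, ρ_x} is at most 1/(Σ_x p_x). -/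
open BigOperators Matrix
open scoped ComplexOrder

def IsDensityMatrix {d : ℕ} (ρ : Matrix (Fin d) (Fin d) ℂ) : Prop :=
  ρ.PosSemidef ∧ ρ.trace = 1

def IsPOVM {d N : ℕ} (M : Fin N → Matrix (Fin d) (Fin d) ℂ) : Prop :=
  (∀ x, (M x).PosSemidef) ∧ ∑ x, M x = 1

/-! Each decomposition gives `ρ - p_x ρ_x = (1 - p_x) σ_x ≥ 0`, hence
`p_x tr(M_x ρ_x) ≤ tr(M_x ρ)` since the trace of a product of positive semidefinite matrices is
nonnegative. Summing over `x` and using `Σ_x M_x = 1` bounds the left side by `tr ρ = 1`. -/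

namespace Matrix

variable {n 𝕜 : Type*} [Fintype n] [RCLike 𝕜]

lemma PosSemidef.trace_mul_nonneg {A B : Matrix n n 𝕜} (hA : A.PosSemidef)
    (hB : B.PosSemidef) : 0 ≤ (A * B).trace := by
  classical
  obtain ⟨C, rfl⟩ : ∃ C : Matrix n n 𝕜, B = Cᴴ * C := by
    open scoped MatrixOrder Matrix.Norms.L2Operator in
    exact CStarAlgebra.nonneg_iff_eq_star_mul_self.mp hB.nonneg
  rw [← Matrix.mul_assoc, trace_mul_cycle]
  exact (hA.mul_mul_conjTranspose_same C).trace_nonneg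

lemma PosSemidef.trace_mul_le_trace_mul {M A B : Matrix n n 𝕜} (hM : M.PosSemidef)
    (hAB : (B - A).PosSemidef) : (M * A).trace ≤ (M * B).trace := by
  simpa [Matrix.mul_sub, trace_sub] using hM.trace_mul_nonneg hAB

end Matrix

lemma IsPOVM.sum_trace_mul {d N : ℕ} {M : Fin N → Matrix (Fin d) (Fin d) ℂ} (hM : IsPOVM M)
    (ρ : Matrix (Fin d) (Fin d) ℂ) : ∑ x, (M x * ρ).trace = ρ.trace := by
  rw [← trace_sum, ← Finset.sum_mul, hM.2, Matrix.one_mul]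

theorem no_signaling_bound_general
    (d N : ℕ) (ρ : Matrix (Fin d) (Fin d) ℂ) (hρ : IsDensityMatrix ρ)
    (ρs σs : Fin N → Matrix (Fin d) (Fin d) ℂ)
    (hσs : ∀ x, IsDensityMatrix (σs x))
    (p : Fin N → ℝ) (hp1 : ∀ x, p x ≤ 1)
    (hppos : 0 < ∑ x, p x)
    (hdec : ∀ x, ρ = (p x : ℂ) • ρs x + ((1 - p x : ℝ) : ℂ) • σs x) :
    ∀ M : Fin N → Matrix (Fin d) (Fin d) ℂ, IsPOVM M →
      (∑ x, p x * ((M x * ρs x).trace).re ≤ 1) ∧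
      (∑ x, (p x / ∑ y, p y) * ((M x * ρs x).trace).re ≤ 1 / ∑ x, p x) := by
  intro M hM
  have hterm (x : Fin N) : p x * ((M x * ρs x).trace).re ≤ ((M x * ρ).trace).re := by
    have hrest : (ρ - (p x : ℂ) • ρs x).PosSemidef := by
      rw [hdec x, add_sub_cancel_left]
      exact (hσs x).1.smul (by exact_mod_cast sub_nonneg.2 (hp1 x))
    simpa [Matrix.mul_smul, trace_smul] using
      (Complex.le_def.1 ((hM.1 x).trace_mul_le_trace_mul hrest)).1
  have hsum : ∑ x, p x * ((M x * ρs x).trace).re ≤ 1 :=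
    calc ∑ x, p x * ((M x * ρs x).trace).re
        ≤ ∑ x, ((M x * ρ).trace).re := Finset.sum_le_sum fun x _ ↦ hterm x
      _ = 1 := by rw [← Complex.re_sum, hM.sum_trace_mul, hρ.2, Complex.one_re]
  refine ⟨hsum, ?_⟩
  simp_rw [div_mul_eq_mul_div, ← Finset.sum_div]
  exact div_le_div_of_nonneg_right hsum hppos.le

/-- no-signaling bound: if one ensemble `ρ` admits `N` decompositions
`ρ = p_x ρ_x + (1 − p_x) σ_x`, then every POVM satisfies `Σ_x p_x tr(M_x ρ_x) ≤ 1`;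
equivalently, with priors `q_x = p_x / Σ_y p_y`, the guessing probability for
`{q_x, ρ_x}` is at most `1 / Σ_x p_x`. -/
theorem no_signaling_bound
    (d N : ℕ) (ρ : Matrix (Fin d) (Fin d) ℂ) (hρ : IsDensityMatrix ρ)
    (ρs σs : Fin N → Matrix (Fin d) (Fin d) ℂ)
    (hρs : ∀ x, IsDensityMatrix (ρs x)) (hσs : ∀ x, IsDensityMatrix (σs x))
    (p : Fin N → ℝ) (hp0 : ∀ x, 0 ≤ p x) (hp1 : ∀ x, p x ≤ 1)
    (hppos : 0 < ∑ x, p x)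
    (hdec : ∀ x, ρ = (p x : ℂ) • ρs x + ((1 - p x : ℝ) : ℂ) • σs x) :
    ∀ M : Fin N → Matrix (Fin d) (Fin d) ℂ, IsPOVM M →
      (∑ x, p x * ((M x * ρs x).trace).re ≤ 1) ∧
      (∑ x, (p x / ∑ y, p y) * ((M x * ρs x).trace).re ≤ 1 / ∑ x, p x) :=
  no_signaling_bound_general d N ρ hρ ρs σs hσs p hp1 hppos hdec
end

section
/- (Isosceles triple of qubit pure states.) Fix θ₀ ∈ ℝ and θ ∈ [0, π/2]. Let |ψ_1⟩ = (cos((θ₀+θ)/2), sin((θ₀+θ)/2)), |ψ_2⟩ = (cos(θ₀/2), sin(θ₀/2)), |ψ_3⟩ = (cos((θ₀−θ)/2), sin((θ₀−θ)/2)) in ℂ², and ρ_x = |ψ_x⟩⟨ψ_x|. Then the guessing probability for ρ_1, ρ_2, ρ_3 with uniform prior probabilities 1/3 equals (1 + sin θ)/3; moreover this value is attained by the POVM M_1 = |φ_3⟩⟨φ_3|, M_2 = 0, M_3 = |φ_1⟩⟨φ_1|, where |φ_1⟩ = (cos(θ₀/2 − π/4), sin(θ₀/2 − π/4)) and |φ_3⟩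 = (cos(θ₀/2 + π/4), sin(θ₀/2 + π/4)). -/
/-!
Weak duality for the state-discrimination SDP: if `Y - q_x ρ_x ⪰ 0` for every `x`, then every
POVM succeeds with probability `∑ q_x tr(M_x ρ_x) ≤ tr Y`. With `ρ₂^⊥ = 1 - ρ₂`, the
certificate `Y = ((1 + sin θ + cos θ)/6) ρ₂ + ((1 + sin θ - cos θ)/6) ρ₂^⊥` has trace
`(1 + sin θ)/3`: `Y - ρ₁/3` and `Y - ρ₃/3` are `(sin θ)/3` times the projectors `M₃` and
`M₁`, and `Y - ρ₂/3` is a combination of `ρ₂` and `ρ₂^⊥` whose coefficients are nonnegative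
because `sin θ + cos θ ≥ 1` on `[0, π/2]`. The POVM of the statement attains `tr Y`.
-/

open BigOperators Matrix Real
open scoped ComplexOrder

/-- The pure qubit state (projector) `|ψ⟩⟨ψ|` with `|ψ⟩ = (cos a, sin a)`. -/
noncomputable def pureState (a : ℝ) : Matrix (Fin 2) (Fin 2) ℂ :=
  Matrix.vecMulVec ![(Real.cos a : ℂ), (Real.sin a : ℂ)]
    (star ![(Real.cos a : ℂ), (Real.sin a : ℂ)])

open scoped MatrixOrder in
theorem Matrix.PosSemidef.trace_mul_nonneg_s16 {n 𝕜 : Type*} [Fintype n] [RCLike 𝕜]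
    {A B : Matrix n n 𝕜} (hA : A.PosSemidef) (hB : B.PosSemidef) : 0 ≤ (A * B).trace := by
  classical
  obtain ⟨hS, hSS⟩ : IsSelfAdjoint (CFC.sqrt B) ∧ CFC.sqrt B * CFC.sqrt B = B :=
    ⟨(CFC.sqrt_nonneg B).isSelfAdjoint, CFC.sqrt_mul_sqrt_self B hB.nonneg⟩
  have h := (hA.mul_mul_conjTranspose_same (CFC.sqrt B)).trace_nonneg
  rwa [← star_eq_conjTranspose, hS.star_eq, trace_mul_cycle, hSS, trace_mul_comm] at h

theorem IsPOVM.sum_mul_re_trace_le {d N : ℕ} {M : Fin N → Matrix (Fin d) (Fin d) ℂ}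
    (hM : IsPOVM M) {q : Fin N → ℝ} {ρ : Fin N → Matrix (Fin d) (Fin d) ℂ}
    {Y : Matrix (Fin d) (Fin d) ℂ} (hY : ∀ x, (Y - q x • ρ x).PosSemidef) :
    ∑ x, q x * ((M x * ρ x).trace).re ≤ Y.trace.re := by
  calc ∑ x, q x * ((M x * ρ x).trace).re = ∑ x, ((M x * (q x • ρ x)).trace).re := by
        simp only [mul_smul_comm, trace_smul, Complex.smul_re, smul_eq_mul]
    _ ≤ ∑ x, ((M x * Y).trace).re := by
        refine Finset.sum_le_sum fun x _ ↦ ?_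
        have h := Complex.nonneg_iff.mp ((hM.1 x).trace_mul_nonneg_s16 (hY x))
        rw [mul_sub, trace_sub, Complex.sub_re] at h
        linarith [h.1]
    _ = Y.trace.re := by rw [← Complex.re_sum, ← trace_sum, ← Finset.sum_mul, hM.2, one_mul]

theorem posSemidef_pureState (a : ℝ) : (pureState a).PosSemidef :=
  posSemidef_vecMulVec_self_star _

theorem pureState_eq (a : ℝ) : pureState a =
    !![((cos a ^ 2 : ℝ) : ℂ), ((cos a * sin a : ℝ) : ℂ);
       ((cos a * sin a : ℝ) : ℂ), ((sin a ^ 2 : ℝ) : ℂ)] := by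
  ext i j
  fin_cases i <;> fin_cases j <;>
    simp [pureState, sq, mul_comm, -Complex.ofReal_cos, -Complex.ofReal_sin]

theorem trace_pureState (a : ℝ) : (pureState a).trace = 1 := by
  rw [pureState_eq, trace_fin_two_of]
  exact_mod_cast cos_sq_add_sin_sq a

theorem trace_pureState_mul_pureState (a b : ℝ) :
    (pureState a * pureState b).trace = ((cos (a - b) ^ 2 : ℝ) : ℂ) := by
  rw [pureState_eq, pureState_eq, mul_fin_two, trace_fin_two_of, cos_sub]
  push_cast
  ring

theorem pureState_add_pureState_add_pi_div_two (a : ℝ) :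
    pureState a + pureState (a + π / 2) = 1 := by
  rw [pureState_eq, pureState_eq, cos_add_pi_div_two, sin_add_pi_div_two]
  ext i j
  fin_cases i <;> fin_cases j <;> simp [-Complex.ofReal_cos, -Complex.ofReal_sin] <;> norm_cast
  all_goals first | ring1 | linear_combination cos_sq_add_sin_sq a

theorem pureState_half (a : ℝ) : pureState (a / 2) =
    !![(((1 + cos a) / 2 : ℝ) : ℂ), ((sin a / 2 : ℝ) : ℂ);
       ((sin a / 2 : ℝ) : ℂ), (((1 - cos a) / 2 : ℝ) : ℂ)] := by
  have hc : cos (a / 2) ^ 2 = (1 + cos a) / 2 := by rw [cos_sq]; ring_nf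
  have hs : sin (a / 2) ^ 2 = (1 - cos a) / 2 := by rw [sin_sq_eq_half_sub]; ring_nf
  have hcs : cos (a / 2) * sin (a / 2) = sin a / 2 := by
    rw [show a = 2 * (a / 2) by ring, sin_two_mul]; ring_nf
  rw [pureState_eq, hc, hs, hcs]

section Isosceles

variable (θ₀ θ : ℝ)

noncomputable def isoscelesStates : Fin 3 → Matrix (Fin 2) (Fin 2) ℂ :=
  ![pureState ((θ₀ + θ) / 2), pureState (θ₀ / 2), pureState ((θ₀ - θ) / 2)]

noncomputable def isoscelesMeasurement : Fin 3 → Matrix (Fin 2) (Fin 2) ℂ :=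
  ![pureState (θ₀ / 2 + π / 4), 0, pureState (θ₀ / 2 - π / 4)]

noncomputable def isoscelesDual : Matrix (Fin 2) (Fin 2) ℂ :=
  ((1 + sin θ + cos θ) / 6) • pureState (θ₀ / 2) +
    ((1 + sin θ - cos θ) / 6) • pureState (θ₀ / 2 + π / 2)

theorem isoscelesDual_sub_pureState_add :
    isoscelesDual θ₀ θ - (1 / 3 : ℝ) • pureState ((θ₀ + θ) / 2) =
      (sin θ / 3) • pureState (θ₀ / 2 - π / 4) := by
  rw [isoscelesDual, show θ₀ / 2 + π / 2 = (θ₀ + π) / 2 by ring,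
    show θ₀ / 2 - π / 4 = (θ₀ - π / 2) / 2 by ring, pureState_half, pureState_half,
    pureState_half, pureState_half]
  ext i j
  fin_cases i <;> fin_cases j <;>
    simp [cos_add, sin_add, cos_sub, sin_sub, -Complex.ofReal_cos, -Complex.ofReal_sin] <;>
    push_cast <;> ring

theorem isoscelesDual_sub_pureState_sub :
    isoscelesDual θ₀ θ - (1 / 3 : ℝ) • pureState ((θ₀ - θ) / 2) =
      (sin θ / 3) • pureState (θ₀ / 2 + π / 4) := by
  rw [isoscelesDual, show θ₀ / 2 + π / 2 = (θ₀ + π) / 2 by ring,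
    show θ₀ / 2 + π / 4 = (θ₀ + π / 2) / 2 by ring, pureState_half, pureState_half,
    pureState_half, pureState_half]
  ext i j
  fin_cases i <;> fin_cases j <;>
    simp [cos_add, sin_add, cos_sub, sin_sub, -Complex.ofReal_cos, -Complex.ofReal_sin] <;>
    push_cast <;> ring

theorem isoscelesDual_sub_pureState :
    isoscelesDual θ₀ θ - (1 / 3 : ℝ) • pureState (θ₀ / 2) =
      ((sin θ + cos θ - 1) / 6) • pureState (θ₀ / 2) +
        ((1 + sin θ - cos θ) / 6) • pureState (θ₀ / 2 + π / 2) := by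
  rw [isoscelesDual]
  module

theorem re_trace_isoscelesDual : (isoscelesDual θ₀ θ).trace.re = (1 + sin θ) / 3 := by
  simp only [isoscelesDual, trace_add, trace_smul, trace_pureState, Complex.add_re,
    Complex.smul_re, Complex.one_re, smul_eq_mul]
  ring

theorem isoscelesDual_sub_posSemidef (hθ : θ ∈ Set.Icc 0 (π / 2)) (x : Fin 3) :
    (isoscelesDual θ₀ θ - (1 / 3 : ℝ) • isoscelesStates θ₀ θ x).PosSemidef := by
  obtain ⟨hθ0, hθπ⟩ := hθ
  have hs : 0 ≤ sin θ := sin_nonneg_of_nonneg_of_le_pi hθ0 (by linarith [pi_pos])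
  have hc : 0 ≤ cos θ := cos_nonneg_of_mem_Icc ⟨by linarith [pi_pos], hθπ⟩
  have hsc : 1 ≤ sin θ + cos θ := by
    nlinarith [sin_sq_add_cos_sq θ, sin_le_one θ, cos_le_one θ]
  fin_cases x <;> simp only [isoscelesStates, Fin.zero_eta, Fin.mk_one, Fin.reduceFinMk,
    cons_val_zero, cons_val_one, cons_val_two, head_cons, tail_cons]
  · rw [isoscelesDual_sub_pureState_add]
    exact (posSemidef_pureState _).smul (by positivity)
  · rw [isoscelesDual_sub_pureState]
    exact ((posSemidef_pureState _).smul (by linarith)).add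
      ((posSemidef_pureState _).smul (by linarith [cos_le_one θ]))
  · rw [isoscelesDual_sub_pureState_sub]
    exact (posSemidef_pureState _).smul (by positivity)

theorem isPOVM_isoscelesMeasurement : IsPOVM (isoscelesMeasurement θ₀) := by
  refine ⟨fun x ↦ ?_, ?_⟩
  · fin_cases x
    · exact posSemidef_pureState _
    · exact .zero
    · exact posSemidef_pureState _
  · rw [Fin.sum_univ_three]
    simp only [isoscelesMeasurement, cons_val_zero, cons_val_one, cons_val_two, head_cons,
      tail_cons, add_zero]
    rw [show θ₀ / 2 + π / 4 = θ₀ / 2 - π / 4 + π / 2 by ring, add_comm]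
    exact pureState_add_pureState_add_pi_div_two _

theorem sum_re_trace_isoscelesMeasurement_mul :
    ∑ x, (1 / 3 : ℝ) * ((isoscelesMeasurement θ₀ x * isoscelesStates θ₀ θ x).trace).re =
      (1 + sin θ) / 3 := by
  simp only [Fin.sum_univ_three, isoscelesMeasurement, isoscelesStates, cons_val_zero,
    cons_val_one, cons_val_two, head_cons, tail_cons, zero_mul, trace_zero,
    trace_pureState_mul_pureState, Complex.ofReal_re, Complex.zero_re]
  rw [show θ₀ / 2 + π / 4 - (θ₀ + θ) / 2 = π / 4 - θ / 2 by ring,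
    show θ₀ / 2 - π / 4 - (θ₀ - θ) / 2 = -(π / 4 - θ / 2) by ring, cos_neg, cos_sq,
    show 2 * (π / 4 - θ / 2) = π / 2 - θ by ring, cos_pi_div_two_sub]
  ring

end Isosceles

/-- isosceles triple of qubit pure states: for the states
`|ψ₁⟩, |ψ₂⟩, |ψ₃⟩` at angles `(θ₀+θ)/2, θ₀/2, (θ₀−θ)/2` with `θ ∈ [0, π/2]` and uniform
priors `1/3`, the guessing probability is `(1 + sin θ)/3`, attained by the POVM
`M₁ = |φ₃⟩⟨φ₃|, M₂ = 0, M₃ = |φ₁⟩⟨φ₁|` with `φ₁, φ₃` at angles `θ₀/2 ∓ π/4`. -/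
theorem isosceles_three_qubit_states
    (θ₀ θ : ℝ) (hθ : θ ∈ Set.Icc 0 (Real.pi / 2)) :
    IsGreatest {v : ℝ | ∃ M : Fin 3 → Matrix (Fin 2) (Fin 2) ℂ, IsPOVM M ∧
        v = ∑ x : Fin 3, (1 / 3 : ℝ) *
          ((M x * (![pureState ((θ₀ + θ) / 2), pureState (θ₀ / 2),
              pureState ((θ₀ - θ) / 2)] x)).trace).re}
      ((1 + Real.sin θ) / 3) ∧
    IsPOVM (![pureState (θ₀ / 2 + Real.pi / 4), 0, pureState (θ₀ / 2 - Real.pi / 4)]) ∧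
    ∑ x : Fin 3, (1 / 3 : ℝ) *
        (((![pureState (θ₀ / 2 + Real.pi / 4), 0, pureState (θ₀ / 2 - Real.pi / 4)] x) *
          (![pureState ((θ₀ + θ) / 2), pureState (θ₀ / 2),
              pureState ((θ₀ - θ) / 2)] x)).trace).re
      = (1 + Real.sin θ) / 3 := by
  have hval := sum_re_trace_isoscelesMeasurement_mul θ₀ θ
  refine ⟨⟨⟨_, isPOVM_isoscelesMeasurement θ₀, hval.symm⟩, ?_⟩,
    isPOVM_isoscelesMeasurement θ₀, hval⟩
  rintro v ⟨M, hM, rfl⟩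
  calc _ ≤ (isoscelesDual θ₀ θ).trace.re :=
        IsPOVM.sum_mul_re_trace_le hM (isoscelesDual_sub_posSemidef θ₀ θ hθ)
    _ = (1 + sin θ) / 3 := re_trace_isoscelesDual θ₀ θ
end
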